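/- If m = p₁^{r₁} ⋯ p_k^{r_k} is the prime factorization of m, then the number of sublattices of index m in ℤ^n equals ∏_{i=1}^{k} ∏_{j=1}^{r_i} (p_i^{n+j-1} − 1)/(p_i^{j} − 1). -/

import Mathlib

/-!
A subgroup `H ≤ G × ℤ` of index `m` is determined by `K = H ∩ G`, of some index `e ∣ m`, the
positive generator `d = m / e` of its projection to `ℤ`, and the class modulo `K` of any `v`
with `(v, d) ∈ H`. Hence the number `a_n(m)` of sublattices of index `m` in `ℤⁿ` satisfies
`a_{n+1}(m) = ∑_{e ∣ m} e · a_n(e)`, i.e. `a_{n+1} = ζ * (id · a_n)` as arithmetic functions.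
So `a_n` is multiplicative, and on prime powers `p^r` this recursion is the `q`-Pascal rule for
the Gaussian binomial `[n + r - 1, r]_p`, which is the product in the statement.
-/

/-- The number of sublattices (subgroups) of index `m` in `ℤ^n`. -/
noncomputable def sublatticeCount (n m : ℕ) : ℕ :=
  Nat.card {H : AddSubgroup (Fin n → ℤ) // H.index = m}

open AddSubgroup

namespace AddSubgroup

variable {G G' : Type*} [AddCommGroup G] [AddCommGroup G']

theorem index_eq_relIndex_ker_mul_index_map {f : G →+ G'} (hf : Function.Surjective f)
    (H : AddSubgroup G) : H.index = H.relIndex f.ker * (H.map f).index := by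
  rw [index_map, f.range_eq_top_of_surjective hf, index_top, mul_one, ← relIndex_sup_left,
    relIndex_mul_index le_sup_left]

theorem index_eq_index_comap_inl_mul_index_map_snd (H : AddSubgroup (G × G')) :
    H.index = (H.comap (.inl G G')).index * (H.map (.snd G G')).index := by
  have : (AddMonoidHom.inl G G').range = (AddMonoidHom.snd G G').ker := by
    ext ⟨a, b⟩; simp [mem_prod, eq_comm]
  rw [index_comap, this, ← index_eq_relIndex_ker_mul_index_map Prod.snd_surjective]

end AddSubgroup

theorem Nat.div_ne_zero_of_mem_divisors {m e : ℕ} (he : e ∈ m.divisors) : m / e ≠ 0 :=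
  (Nat.div_pos (Nat.divisor_le he) (Nat.pos_of_mem_divisors he)).ne'

section ProdInt

variable {G : Type*} [AddCommGroup G] {K : AddSubgroup G} {d : ℕ} {v : G ⧸ K}

def prodIntSubgroup (K : AddSubgroup G) (d : ℕ) (v : G ⧸ K) : AddSubgroup (G × ℤ) :=
  (zmultiples (v, (d : ℤ))).comap ((QuotientAddGroup.mk' K).prodMap (AddMonoidHom.id ℤ))

theorem mem_prodIntSubgroup {x : G × ℤ} :
    x ∈ prodIntSubgroup K d v ↔ ∃ k : ℤ, k • v = x.1 ∧ k * d = x.2 := by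
  simp [prodIntSubgroup, mem_zmultiples_iff, Prod.ext_iff]

theorem comap_inl_prodIntSubgroup (hd : d ≠ 0) :
    (prodIntSubgroup K d v).comap (.inl G ℤ) = K := by
  ext g
  simp [mem_prodIntSubgroup, hd, eq_comm (a := (0 : G ⧸ K))]

theorem map_snd_prodIntSubgroup :
    (prodIntSubgroup K d v).map (.snd G ℤ) = zmultiples (d : ℤ) := by
  ext t
  simp only [mem_map, mem_prodIntSubgroup, mem_zmultiples_iff, smul_eq_mul]
  constructor
  · rintro ⟨x, ⟨k, -, hk⟩, rfl⟩
    exact ⟨k, hk⟩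
  · rintro ⟨k, rfl⟩
    obtain ⟨g, hg⟩ := QuotientAddGroup.mk_surjective (k • v)
    exact ⟨(g, k * d), ⟨k, hg.symm, rfl⟩, rfl⟩

theorem index_prodIntSubgroup (hd : d ≠ 0) : (prodIntSubgroup K d v).index = K.index * d := by
  rw [index_eq_index_comap_inl_mul_index_map_snd, comap_inl_prodIntSubgroup hd,
    map_snd_prodIntSubgroup, Int.index_zmultiples, Int.natAbs_natCast]

theorem eq_prodIntSubgroup {H : AddSubgroup (G × ℤ)} {v : G}
    (hH : H.map (.snd G ℤ) = zmultiples (d : ℤ)) (hv : (v, (d : ℤ)) ∈ H) :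
    H = prodIntSubgroup (H.comap (.inl G ℤ)) d v := by
  have key : ∀ (g : G) (k : ℤ), (g, k * d) ∈ H ↔ g - k • v ∈ H.comap (.inl G ℤ) := by
    intro g k
    have : (g, k * (d : ℤ)) = (g - k • v, 0) + k • (v, (d : ℤ)) := by ext <;> simp
    rw [this, add_mem_cancel_right (zsmul_mem hv k)]
    rfl
  ext ⟨g, t⟩
  rw [mem_prodIntSubgroup]
  constructor
  · intro hgt
    obtain ⟨k, rfl⟩ : ∃ k : ℤ, k * d = t := by
      simpa [hH, mem_zmultiples_iff] using mem_map_of_mem (.snd G ℤ) hgt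
    refine ⟨k, ?_, rfl⟩
    rwa [← QuotientAddGroup.mk_zsmul, eq_comm, QuotientAddGroup.eq_iff_sub_mem, ← key]
  · rintro ⟨k, hk, rfl⟩
    rwa [key, ← QuotientAddGroup.eq_iff_sub_mem, QuotientAddGroup.mk_zsmul, eq_comm]

theorem prodIntSubgroup_injective (hd : d ≠ 0) : Function.Injective (prodIntSubgroup K d) := by
  intro v v' h
  obtain ⟨g, rfl⟩ := QuotientAddGroup.mk_surjective v
  have hg : (g, (d : ℤ)) ∈ prodIntSubgroup K d g :=
    mem_prodIntSubgroup.2 ⟨1, one_smul _ _, one_mul _⟩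
  obtain ⟨k, hkg, hkd⟩ := mem_prodIntSubgroup.1 (h ▸ hg)
  obtain rfl : k = 1 := (mul_eq_right₀ (Int.natCast_ne_zero.2 hd)).1 hkd
  exact (one_smul ℤ v').symm.trans hkg |>.symm

variable (G) in
def prodIntSubgroupOfDivisor (m : ℕ) :
    (Σ e : m.divisors, Σ K : {K : AddSubgroup G // K.index = e}, G ⧸ K.1) →
      {H : AddSubgroup (G × ℤ) // H.index = m} :=
  fun x => ⟨prodIntSubgroup x.2.1.1 (m / x.1) x.2.2, by
    rw [index_prodIntSubgroup (Nat.div_ne_zero_of_mem_divisors x.1.2), x.2.1.2,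
      Nat.mul_div_cancel' (Nat.dvd_of_mem_divisors x.1.2)]⟩

theorem prodIntSubgroupOfDivisor_injective (m : ℕ) :
    Function.Injective (prodIntSubgroupOfDivisor G m) := by
  rintro ⟨e, ⟨K, hK⟩, v⟩ ⟨e', ⟨K', hK'⟩, v'⟩ h
  have hd := Nat.div_ne_zero_of_mem_divisors e.2
  replace h : prodIntSubgroup K (m / e) v = prodIntSubgroup K' (m / e') v' := congrArg Subtype.val h
  obtain rfl : K = K' := by
    have hKK' := comap_inl_prodIntSubgroup hd (v := v)
    rw [h, comap_inl_prodIntSubgroup (Nat.div_ne_zero_of_mem_divisors e'.2)] at hKK'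
    exact hKK'.symm
  obtain rfl : e = e' := Subtype.ext (hK.symm.trans hK')
  obtain rfl : v = v' := prodIntSubgroup_injective hd h
  rfl

theorem prodIntSubgroupOfDivisor_surjective {m : ℕ} (hm : m ≠ 0) :
    Function.Surjective (prodIntSubgroupOfDivisor G m) := by
  rintro ⟨H, hH⟩
  obtain ⟨a, ha⟩ := Int.subgroup_cyclic (H.map (.snd G ℤ))
  set d := a.natAbs
  have hHd : H.map (.snd G ℤ) = zmultiples (d : ℤ) := by
    rw [ha, Int.zmultiples_natAbs, zmultiples_eq_closure]
  set K := H.comap (.inl G ℤ)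
  have hKd : K.index * d = m := by
    rw [← hH, index_eq_index_comap_inl_mul_index_map_snd H, hHd, Int.index_zmultiples,
      Int.natAbs_natCast]
  have hKm : K.index ∈ m.divisors := Nat.mem_divisors.2 ⟨Dvd.intro _ hKd, hm⟩
  have hmK : m / K.index = d := by
    rw [← hKd, Nat.mul_div_cancel_left _ (Nat.pos_of_mem_divisors hKm)]
  obtain ⟨⟨v, t⟩, hv, rfl : t = d⟩ : (d : ℤ) ∈ H.map (.snd G ℤ) := hHd ▸ mem_zmultiples _
  refine ⟨⟨⟨K.index, hKm⟩, ⟨K, rfl⟩, v⟩, Subtype.ext ?_⟩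
  simp only [prodIntSubgroupOfDivisor, hmK]
  exact (eq_prodIntSubgroup hHd hv).symm

variable (G) in
noncomputable def prodIntSubgroupEquiv {m : ℕ} (hm : m ≠ 0) :
    (Σ e : m.divisors, Σ K : {K : AddSubgroup G // K.index = e}, G ⧸ K.1) ≃
      {H : AddSubgroup (G × ℤ) // H.index = m} :=
  .ofBijective _ ⟨prodIntSubgroupOfDivisor_injective m, prodIntSubgroupOfDivisor_surjective hm⟩

theorem finite_subgroups_prod_int {m : ℕ} (hm : m ≠ 0)
    (hfin : ∀ e ∈ m.divisors, Finite {K : AddSubgroup G // K.index = e}) :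
    Finite {H : AddSubgroup (G × ℤ) // H.index = m} := by
  have (e : m.divisors) : Finite {K : AddSubgroup G // K.index = e} := hfin e e.2
  have (e : m.divisors) (K : {K : AddSubgroup G // K.index = e}) : K.1.FiniteIndex :=
    ⟨by rw [K.2]; exact (Nat.pos_of_mem_divisors e.2).ne'⟩
  exact .of_equiv _ (prodIntSubgroupEquiv G hm)

theorem card_subgroups_prod_int {m : ℕ} (hm : m ≠ 0)
    (hfin : ∀ e ∈ m.divisors, Finite {K : AddSubgroup G // K.index = e}) :
    Nat.card {H : AddSubgroup (G × ℤ) // H.index = m} =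
      ∑ e ∈ m.divisors, Nat.card {K : AddSubgroup G // K.index = e} * e := by
  have (e : m.divisors) : Fintype {K : AddSubgroup G // K.index = e} :=
    have := hfin e e.2; .ofFinite _
  have (e : m.divisors) (K : {K : AddSubgroup G // K.index = e}) : K.1.FiniteIndex :=
    ⟨by rw [K.2]; exact (Nat.pos_of_mem_divisors e.2).ne'⟩
  rw [← Nat.card_congr (prodIntSubgroupEquiv G hm), Nat.card_sigma,
    ← Finset.sum_coe_sort m.divisors]
  refine Finset.sum_congr rfl fun e _ => ?_
  rw [Nat.card_sigma, Finset.sum_congr rfl fun K _ => K.2, Finset.sum_const, Finset.card_univ,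
    smul_eq_mul, Nat.card_eq_fintype_card]

end ProdInt

def AddEquiv.subgroupsOfIndexCongr {G G' : Type*} [AddGroup G] [AddGroup G'] (e : G ≃+ G')
    (m : ℕ) : {H : AddSubgroup G // H.index = m} ≃ {H : AddSubgroup G' // H.index = m} :=
  e.mapAddSubgroup.toEquiv.subtypeEquiv fun H => by simp [index_map_equiv]

def finSuccIntEquiv (n : ℕ) : (Fin (n + 1) → ℤ) ≃+ (Fin n → ℤ) × ℤ :=
  (Fin.consLinearEquiv ℤ fun _ => ℤ).toAddEquiv.symm.trans (AddEquiv.prodComm)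

theorem finite_sublattices (n : ℕ) {m : ℕ} (hm : m ≠ 0) :
    Finite {H : AddSubgroup (Fin n → ℤ) // H.index = m} := by
  induction n generalizing m with
  | zero => infer_instance
  | succ n ih =>
    have := finite_subgroups_prod_int hm fun e he => ih (Nat.pos_of_mem_divisors he).ne'
    exact .of_equiv _ ((finSuccIntEquiv n).subgroupsOfIndexCongr m).symm

theorem sublatticeCount_succ (n : ℕ) {m : ℕ} (hm : m ≠ 0) :
    sublatticeCount (n + 1) m = ∑ e ∈ m.divisors, sublatticeCount n e * e := by
  rw [sublatticeCount, Nat.card_congr ((finSuccIntEquiv n).subgroupsOfIndexCongr m)]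
  exact card_subgroups_prod_int hm fun e he => finite_sublattices n (Nat.pos_of_mem_divisors he).ne'

theorem sublatticeCount_zero (m : ℕ) : sublatticeCount 0 m = if m = 1 then 1 else 0 := by
  have (H : AddSubgroup (Fin 0 → ℤ)) : H.index = 1 := by
    rw [Subsingleton.elim H ⊤, index_top]
  simp only [sublatticeCount, this]
  split_ifs with h <;> simp [h, Ne.symm]

open ArithmeticFunction
open scoped ArithmeticFunction.zeta

noncomputable def sublatticeCountFun (n : ℕ) : ArithmeticFunction ℕ :=
  ⟨fun m => if m = 0 then 0 else sublatticeCount n m, rfl⟩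

theorem sublatticeCountFun_apply {n m : ℕ} (hm : m ≠ 0) :
    sublatticeCountFun n m = sublatticeCount n m :=
  if_neg hm

theorem sublatticeCountFun_zero : sublatticeCountFun 0 = 1 := by
  ext m
  rcases eq_or_ne m 0 with rfl | hm
  · simp
  · rw [sublatticeCountFun_apply hm, sublatticeCount_zero, one_apply]

theorem sublatticeCountFun_succ (n : ℕ) :
    sublatticeCountFun (n + 1) = ζ * ArithmeticFunction.id.pmul (sublatticeCountFun n) := by
  ext m
  rcases eq_or_ne m 0 with rfl | hm
  · simp
  rw [sublatticeCountFun_apply hm, zeta_mul_apply, sublatticeCount_succ n hm]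
  refine Finset.sum_congr rfl fun e he => ?_
  rw [pmul_apply, id_apply, sublatticeCountFun_apply (Nat.pos_of_mem_divisors he).ne', mul_comm]

theorem isMultiplicative_sublatticeCountFun (n : ℕ) :
    (sublatticeCountFun n).IsMultiplicative := by
  induction n with
  | zero => rw [sublatticeCountFun_zero]; exact isMultiplicative_one
  | succ n ih =>
    rw [sublatticeCountFun_succ]
    exact isMultiplicative_zeta.mul (isMultiplicative_id.pmul ih)

section QMultichoose

open Finset

variable {F : Type*} [Field F] (q : F)

/-- The Gaussian binomial coefficient `[n + r - 1, r]_q`, the `q`-analogue of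
`Nat.multichoose n r`. -/
def qMultichoose (n r : ℕ) : F :=
  ∏ i ∈ range r, (q ^ (n + i) - 1) / (q ^ (i + 1) - 1)

@[simp]
theorem qMultichoose_zero_right (n : ℕ) : qMultichoose q n 0 = 1 := prod_range_zero _

theorem qMultichoose_zero_succ (r : ℕ) : qMultichoose q 0 (r + 1) = 0 :=
  prod_eq_zero (mem_range.2 r.succ_pos) (by simp)

theorem qMultichoose_succ_right (n r : ℕ) :
    qMultichoose q n (r + 1) = qMultichoose q n r * ((q ^ (n + r) - 1) / (q ^ (r + 1) - 1)) :=
  prod_range_succ _ _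

theorem qMultichoose_succ_right' (n r : ℕ) :
    qMultichoose q n (r + 1) = qMultichoose q (n + 1) r * ((q ^ n - 1) / (q ^ (r + 1) - 1)) := by
  simp only [qMultichoose, prod_div_distrib]
  rw [prod_range_succ' (fun i => q ^ (n + i) - 1), prod_range_succ (fun i => q ^ (i + 1) - 1),
    mul_div_mul_comm, add_zero]
  simp only [add_assoc, add_comm 1]

variable {q}

theorem qMultichoose_succ_succ (hq : ∀ j : ℕ, q ^ (j + 1) ≠ 1) (n r : ℕ) :
    qMultichoose q (n + 1) (r + 1) =
      qMultichoose q (n + 1) r + q ^ (r + 1) * qMultichoose q n (r + 1) := by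
  have hr : q ^ (r + 1) - 1 ≠ 0 := sub_ne_zero.2 (hq r)
  rw [qMultichoose_succ_right, qMultichoose_succ_right']
  field_simp
  ring

theorem sum_range_pow_mul_qMultichoose (hq : ∀ j : ℕ, q ^ (j + 1) ≠ 1) (n r : ℕ) :
    ∑ s ∈ range (r + 1), q ^ s * qMultichoose q n s = qMultichoose q (n + 1) r := by
  induction r with
  | zero => simp
  | succ r ih => rw [sum_range_succ, ih, qMultichoose_succ_succ hq]

theorem qMultichoose_eq_prod_Icc (n r : ℕ) :
    qMultichoose q n r = ∏ j ∈ Icc 1 r, (q ^ (n + j - 1) - 1) / (q ^ j - 1) := by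
  rw [← Ico_add_one_right_eq_Icc, prod_Ico_eq_prod_range, qMultichoose, add_tsub_cancel_right]
  refine prod_congr rfl fun i _ => ?_
  rw [add_comm 1 i, ← add_assoc, add_tsub_cancel_right]

end QMultichoose

theorem cast_sublatticeCountFun_prime_pow {p : ℕ} (hp : p.Prime) (n r : ℕ) :
    (sublatticeCountFun n (p ^ r) : ℚ) = qMultichoose (p : ℚ) n r := by
  have hq : ∀ j : ℕ, (p : ℚ) ^ (j + 1) ≠ 1 :=
    fun j => (one_lt_pow₀ (by exact_mod_cast hp.one_lt) j.succ_ne_zero).ne'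
  induction n generalizing r with
  | zero =>
    rcases r with _ | r
    · simp [sublatticeCountFun_zero]
    · rw [sublatticeCountFun_zero, one_apply_ne (Nat.one_lt_pow r.succ_ne_zero hp.one_lt).ne',
        qMultichoose_zero_succ, Nat.cast_zero]
  | succ n ih =>
    rw [sublatticeCountFun_succ, zeta_mul_apply, Nat.sum_divisors_prime_pow hp, Nat.cast_sum,
      ← sum_range_pow_mul_qMultichoose hq]
    refine Finset.sum_congr rfl fun s _ => ?_
    rw [pmul_apply, id_apply, Nat.cast_mul, ih, Nat.cast_pow]

theorem sublattice_count_eq_gruber_product_general (n m k : ℕ)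
    (p r : Fin k → ℕ) (hp : ∀ i, (p i).Prime) (hinj : Function.Injective p)
    (hm : m = ∏ i, p i ^ r i) :
    (sublatticeCount n m : ℚ) =
      ∏ i, ∏ j ∈ Finset.Icc 1 (r i),
        ((p i : ℚ) ^ (n + j - 1) - 1) / ((p i : ℚ) ^ j - 1) := by
  have hm0 : m ≠ 0 := hm ▸ Finset.prod_ne_zero_iff.2 fun i _ => pow_ne_zero _ (hp i).ne_zero
  have hcoprime : Pairwise (Function.onFun Nat.Coprime fun i => p i ^ r i) := fun i j hij =>
    .pow _ _ ((Nat.coprime_primes (hp i) (hp j)).2 (hinj.ne hij))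
  rw [← sublatticeCountFun_apply hm0, hm,
    (isMultiplicative_sublatticeCountFun n).map_prod _ _ (hcoprime.set_pairwise _), Nat.cast_prod]
  exact Finset.prod_congr rfl fun i _ =>
    (cast_sublatticeCountFun_prime_pow (hp i) n (r i)).trans (qMultichoose_eq_prod_Icc _ _)

theorem sublattice_count_eq_gruber_product (n m k : ℕ)
    (p r : Fin k → ℕ) (hp : ∀ i, (p i).Prime) (hinj : Function.Injective p)
    (hr : ∀ i, 1 ≤ r i) (hm : m = ∏ i, p i ^ r i) :
    (sublatticeCount n m : ℚ) =
      ∏ i, ∏ j ∈ Finset.Icc 1 (r i),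
        ((p i : ℚ) ^ (n + j - 1) - 1) / ((p i : ℚ) ^ j - 1) :=
  sublattice_count_eq_gruber_product_general n m k p r hp hinj hm
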